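/- arXiv:2204.05664 — 4 statements merged into one kernel-verified Lean document; each statement's English description precedes it below -/
import Mathlib

section
/- For all integers n and k with k > 1 and n ≥ k(k+1), the Roman domination number of the Kneser graph K_{n,k} equals 2(k+1), i.e. γ_R(K_{n,k}) = 2(k+1). -/
def kneserGraph (n k : ℕ) : SimpleGraph {s : Finset (Fin n) // s.card = k} where
  Adj a b := a ≠ b ∧ Disjoint a.1 b.1
  symm := ⟨fun a b h => ⟨h.1.symm, h.2.symm⟩⟩
  loopless := ⟨fun a h => h.1 rfl⟩

def IsRDF {V : Type*} (G : SimpleGraph V) (f : V → ℕ) : Prop :=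
  (∀ v, f v ≤ 2) ∧ ∀ v, f v = 0 → ∃ u, G.Adj v u ∧ f u = 2

noncomputable def romanDomNum {V : Type*} [Fintype V] (G : SimpleGraph V) : ℕ :=
  sInf {w | ∃ f, IsRDF G f ∧ ∑ v, f v = w}

open Classical in
def IsTRDF {V : Type*} [Fintype V] (G : SimpleGraph V) (f : V → ℕ) : Prop :=
  IsRDF G f ∧ ∀ v, 1 ≤ ∑ u ∈ Finset.univ.filter (fun u => G.Adj v u), f u

noncomputable def totalRomanDomNum {V : Type*} [Fintype V] (G : SimpleGraph V) : ℕ :=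
  sInf {w | ∃ f, IsTRDF G f ∧ ∑ v, f v = w}

open Classical in
def IsSRDF {V : Type*} [Fintype V] (G : SimpleGraph V) (f : V → ℤ) : Prop :=
  (∀ v, f v = -1 ∨ f v = 1 ∨ f v = 2) ∧
  (∀ v, f v = -1 → ∃ u, G.Adj v u ∧ f u = 2) ∧
  (∀ v, 1 ≤ f v + ∑ u ∈ Finset.univ.filter (fun u => G.Adj v u), f u)

noncomputable def signedRomanDomNum {V : Type*} [Fintype V] (G : SimpleGraph V) : ℤ :=
  sInf {w | ∃ f, IsSRDF G f ∧ ∑ v, f v = w}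

def IsDominatingSet {V : Type*} (G : SimpleGraph V) (S : Finset V) : Prop :=
  ∀ v, v ∉ S → ∃ u ∈ S, G.Adj v u

noncomputable def domNum {V : Type*} [Fintype V] (G : SimpleGraph V) : ℕ :=
  sInf {m | ∃ S : Finset V, IsDominatingSet G S ∧ S.card = m}

/-!
A family of `k + 1` pairwise disjoint `k`-sets (it exists because `n ≥ k (k + 1)`) dominates
`K(n, k)`, since a `k`-set meets at most `k` of them; weight `2` on it is a Roman dominating
function of weight `2 (k + 1)`.

Conversely, let `𝒜` be the family of vertices of weight `2`. A vertex meeting every member of `𝒜`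
has no neighbour in `𝒜`, hence weight at least `1`, so the total weight is at least
`2 |𝒜| + |T(𝒜) \ 𝒜|`, where `T(𝒜)` is the set of `k`-sets meeting all members of `𝒜`. If some
set of fewer than `k` points meets every member of `𝒜`, all `n - k + 1` of the `k`-sets containing
a fixed `(k - 1)`-superset of it lie in `T(𝒜)`. Otherwise `𝒜` consists of exactly `k` pairwise
disjoint sets, and two distinct choices of one point from each give two vertices of `T(𝒜) \ 𝒜`.
When `𝒜` is empty, `T(𝒜)` is the whole vertex set, of size `n.choose k ≥ n`. In every case the
bound is at least `2 (k + 1)`.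
-/

open Finset

theorem Nat.self_le_choose {n k : ℕ} (hk : 0 < k) (hkn : k < n) : n ≤ n.choose k := by
  induction n with
  | zero => omega
  | succ n ih =>
    obtain ⟨j, rfl⟩ : ∃ j, k = j + 1 := ⟨k - 1, by omega⟩
    rcases Nat.lt_or_ge (j + 1) n with hjn | hjn
    · have hpos : 0 < n.choose j := Nat.choose_pos (by omega)
      rw [Nat.choose_succ_succ']
      have := ih hjn
      omega
    · obtain rfl : n = j + 1 := by omega
      rw [Nat.choose_succ_self_right]

section RomanDomination

variable {V : Type*} [Fintype V] {G : SimpleGraph V}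

theorem romanDomNum_eq_of_forall_le {w : ℕ} (hle : ∀ f, IsRDF G f → w ≤ ∑ v, f v)
    (hex : ∃ f, IsRDF G f ∧ ∑ v, f v = w) : romanDomNum G = w :=
  le_antisymm (Nat.sInf_le hex) (le_csInf ⟨w, hex⟩ (by rintro _ ⟨f, hf, rfl⟩; exact hle f hf))

theorem IsDominatingSet.exists_isRDF_sum_eq {S : Finset V} (hS : IsDominatingSet G S) :
    ∃ f, IsRDF G f ∧ ∑ v, f v = 2 * #S := by
  classical
  refine ⟨fun v => if v ∈ S then 2 else 0,
    ⟨fun v => by dsimp only; split_ifs <;> omega, fun v hv => ?_⟩, ?_⟩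
  · obtain ⟨u, hu, hadj⟩ := hS v fun h => by simp [h] at hv
    exact ⟨u, hadj, if_pos hu⟩
  · rw [sum_ite_mem, univ_inter, sum_const, smul_eq_mul, mul_comm]

variable [DecidableEq V]

theorem IsRDF.two_mul_card_add_card_sdiff_le_sum {f : V → ℕ} (hf : IsRDF G f) {S : Finset V}
    (hS : ∀ v ∈ S, ∀ u, f u = 2 → ¬G.Adj v u) :
    2 * #{v | f v = 2} + #(S \ ({v | f v = 2} : Finset V)) ≤ ∑ v, f v := by
  set P : Finset V := {v | f v = 2}
  have hpos : ∀ v ∈ S \ P, 1 ≤ f v := fun v hv => by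
    by_contra! h0
    obtain ⟨u, hadj, hu⟩ := hf.2 v (by omega)
    exact hS v (mem_sdiff.1 hv).1 u hu hadj
  calc 2 * #P + #(S \ P) = ∑ v ∈ P, f v + ∑ v ∈ S \ P, 1 := by
        rw [sum_congr rfl fun v hv => (mem_filter.1 hv).2, sum_const, sum_const, smul_eq_mul,
          smul_eq_mul, mul_one, mul_comm]
    _ ≤ ∑ v ∈ P, f v + ∑ v ∈ S \ P, f v := by gcongr with v hv; exact hpos v hv
    _ = ∑ v ∈ P ∪ S \ P, f v := (sum_union disjoint_sdiff).symm
    _ ≤ ∑ v, f v := sum_le_sum_of_subset (subset_univ _)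

end RomanDomination

section HittingSets

variable {ι α : Type*} [DecidableEq α]

theorem exists_hittingSet_card_le (𝒜 : Finset ι) {F : ι → Finset α}
    (hF : ∀ i ∈ 𝒜, (F i).Nonempty) : ∃ T : Finset α, #T ≤ #𝒜 ∧ ∀ i ∈ 𝒜, ¬Disjoint T (F i) := by
  classical
  induction 𝒜 using Finset.induction_on with
  | empty => exact ⟨∅, by simp⟩
  | insert i 𝒜 hi ih =>
    obtain ⟨T, hT, hhit⟩ := ih fun j hj => hF j (mem_insert_of_mem hj)
    obtain ⟨a, ha⟩ := hF i (mem_insert_self i 𝒜)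
    refine ⟨insert a T, ?_, ?_⟩
    · grw [card_insert_le, card_insert_of_notMem hi, hT]
    · simp only [mem_insert, forall_eq_or_imp]
      exact ⟨not_disjoint_iff.2 ⟨a, mem_insert_self a T, ha⟩,
        fun j hj h => hhit j hj (h.mono_left (subset_insert a T))⟩

theorem exists_hittingSet_card_lt_of_not_disjoint {𝒜 : Finset ι}
    {F : ι → Finset α} (hF : ∀ i ∈ 𝒜, (F i).Nonempty) {i j : ι} (hi : i ∈ 𝒜) (hj : j ∈ 𝒜)
    (hij : i ≠ j) (hmeet : ¬Disjoint (F i) (F j)) :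
    ∃ T : Finset α, #T < #𝒜 ∧ ∀ l ∈ 𝒜, ¬Disjoint T (F l) := by
  classical
  obtain ⟨z, hzi, hzj⟩ := not_disjoint_iff.1 hmeet
  obtain ⟨T, hT, hhit⟩ := exists_hittingSet_card_le ((𝒜.erase i).erase j)
    fun l hl => hF l (mem_of_mem_erase (mem_of_mem_erase hl))
  refine ⟨insert z T, ?_, fun l hl => ?_⟩
  · have := card_erase_of_mem (mem_erase.2 ⟨hij.symm, hj⟩)
    have := card_erase_of_mem hi
    have := card_insert_le z T
    have := (𝒜.erase i).card_pos.2 ⟨j, mem_erase.2 ⟨hij.symm, hj⟩⟩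
    omega
  · rw [not_disjoint_iff]
    by_cases hli : l = i
    · exact ⟨z, mem_insert_self z T, hli ▸ hzi⟩
    by_cases hlj : l = j
    · exact ⟨z, mem_insert_self z T, hlj ▸ hzj⟩
    obtain ⟨a, haT, hal⟩ := not_disjoint_iff.1 (hhit l (mem_erase.2 ⟨hlj, mem_erase.2 ⟨hli, hl⟩⟩))
    exact ⟨a, mem_insert_of_mem haT, hal⟩

theorem card_image_of_pairwiseDisjoint {𝒜 : Finset ι} {F : ι → Finset α}
    (hF : (𝒜 : Set ι).PairwiseDisjoint F) {g : ι → α} (hg : ∀ i ∈ 𝒜, g i ∈ F i) :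
    #(𝒜.image g) = #𝒜 :=
  card_image_of_injOn fun i hi j hj hij =>
    hF.elim hi hj (not_disjoint_iff.2 ⟨g i, hg i hi, hij ▸ hg j hj⟩)

theorem exists_disjoint_of_card_lt_of_pairwiseDisjoint (s : Finset α) {𝒜 : Finset ι}
    {F : ι → Finset α} (hF : (𝒜 : Set ι).PairwiseDisjoint F) (hcard : #s < #𝒜) :
    ∃ i ∈ 𝒜, Disjoint s (F i) := by
  by_contra! hmeet
  have hle := card_le_card_biUnion (hF.mono fun i => inter_subset_right (s₁ := s))
    fun i hi => not_disjoint_iff_nonempty_inter.1 (hmeet i hi)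
  have : #(𝒜.biUnion fun i => s ∩ F i) ≤ #s :=
    card_le_card (biUnion_subset.2 fun i _ => inter_subset_left)
  omega

end HittingSets

section KSets

variable {α : Type*} [Fintype α] [DecidableEq α] {k : ℕ}

def transversals (𝒜 : Finset {s : Finset α // #s = k}) : Finset {s : Finset α // #s = k} :=
  {v | ∀ A ∈ 𝒜, ¬Disjoint v.1 A.1}

@[simp]
theorem mem_transversals {𝒜 : Finset {s : Finset α // #s = k}} {v : {s : Finset α // #s = k}} :
    v ∈ transversals 𝒜 ↔ ∀ A ∈ 𝒜, ¬Disjoint v.1 A.1 := by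
  simp [transversals]

theorem card_sub_add_one_le_card_superset {T : Finset α} (hT : #T < k)
    (hk : k ≤ Fintype.card α) :
    Fintype.card α - k + 1 ≤ #{v : {s : Finset α // #s = k} | T ⊆ v.1} := by
  obtain ⟨E, hTE, hE⟩ := exists_superset_card_eq (n := k - 1) (s := T) (by omega) (by omega)
  let extend : {x // x ∉ E} → {v : {s : Finset α // #s = k} // T ⊆ v.1} := fun x =>
    ⟨⟨insert x.1 E, by rw [card_insert_of_notMem x.2]; omega⟩, hTE.trans (subset_insert _ _)⟩
  have hextend : Function.Injective extend := fun x y h =>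
    Subtype.ext <| (insert_inj x.2).1 (congrArg (·.1.1) h)
  calc Fintype.card α - k + 1 = Fintype.card {x // x ∉ E} := by
        rw [Fintype.card_subtype_compl, Fintype.card_coe, hE]; omega
    _ ≤ Fintype.card {v : {s : Finset α // #s = k} // T ⊆ v.1} :=
        Fintype.card_le_of_injective extend hextend
    _ = #{v : {s : Finset α // #s = k} | T ⊆ v.1} := Fintype.card_subtype _

theorem two_le_card_transversals_sdiff (hk : 2 ≤ k) {𝒜 : Finset {s : Finset α // #s = k}}
    (hcard : #𝒜 = k) (hdisj : (𝒜 : Set {s : Finset α // #s = k}).PairwiseDisjoint Subtype.val) :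
    2 ≤ #(transversals 𝒜 \ 𝒜) := by
  choose lo hlo hi hhi hne using fun A : {s : Finset α // #s = k} =>
    one_lt_card.1 (show 1 < #A.1 by rw [A.2]; omega)
  have hvert : ∀ g : {s : Finset α // #s = k} → α, (∀ A, g A ∈ A.1) → #(𝒜.image g) = k :=
    fun g hg => (card_image_of_pairwiseDisjoint hdisj fun A _ => hg A).trans hcard
  have hmem : ∀ g hg, (⟨𝒜.image g, hvert g hg⟩ : {s : Finset α // #s = k}) ∈
      transversals 𝒜 \ 𝒜 := by
    intro g hg
    have hmeet : ∀ A ∈ 𝒜, ¬Disjoint (𝒜.image g) A.1 := fun A hA =>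
      not_disjoint_iff.2 ⟨g A, mem_image_of_mem g hA, hg A⟩
    refine mem_sdiff.2 ⟨mem_transversals.2 hmeet, fun hself => ?_⟩
    obtain ⟨B, hB, hBne⟩ := exists_mem_ne (show 1 < #𝒜 by omega) ⟨_, hvert g hg⟩
    exact hmeet B hB (hdisj hself hB hBne.symm)
  refine one_lt_card.2 ⟨_, hmem lo hlo, _, hmem hi hhi, fun h => ?_⟩
  obtain ⟨A, hA⟩ := card_pos.1 (show 0 < #𝒜 by omega)
  have himage : 𝒜.image lo = 𝒜.image hi := congrArg Subtype.val h
  have hloA : lo A ∈ 𝒜.image hi := himage ▸ mem_image_of_mem lo hA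
  obtain ⟨B, hB, hBA⟩ := mem_image.1 hloA
  obtain rfl : B = A := hdisj.elim hB hA (not_disjoint_iff.2 ⟨hi B, hhi B, hBA ▸ hlo A⟩)
  exact hne B hBA.symm

theorem two_mul_succ_le_two_mul_card_add_card_transversals_sdiff (hk : 2 ≤ k)
    (hn : 3 * k ≤ Fintype.card α) (𝒜 : Finset {s : Finset α // #s = k}) :
    2 * (k + 1) ≤ 2 * #𝒜 + #(transversals 𝒜 \ 𝒜) := by
  rcases Nat.lt_or_ge k #𝒜 with hlarge | hsmall
  · omega
  rcases 𝒜.eq_empty_or_nonempty with rfl | h𝒜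
  · have := Nat.self_le_choose (show 0 < k by omega) (show k < Fintype.card α by omega)
    have huniv : transversals (∅ : Finset {s : Finset α // #s = k}) = univ := by ext; simp
    rw [huniv, sdiff_empty, card_empty, card_univ, Fintype.card_finset_len]
    omega
  by_cases hhit : ∃ T : Finset α, #T < k ∧ ∀ A ∈ 𝒜, ¬Disjoint T A.1
  · obtain ⟨T, hT, hTmeet⟩ := hhit
    have hsub : ({v | T ⊆ v.1} : Finset {s : Finset α // #s = k}) ⊆ transversals 𝒜 :=
      fun v hv => mem_transversals.2 fun A hA hdisj =>
        hTmeet A hA (hdisj.mono_left (mem_filter.1 hv).2)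
    have := card_sub_add_one_le_card_superset hT (show k ≤ Fintype.card α by omega)
    have := card_le_card hsub
    have := le_card_sdiff 𝒜 (transversals 𝒜)
    have := h𝒜.card_pos
    omega
  have hne : ∀ A ∈ 𝒜, A.1.Nonempty := fun A _ => card_pos.1 (by rw [A.2]; omega)
  obtain ⟨T, hT, hTmeet⟩ := exists_hittingSet_card_le 𝒜 hne
  have hcard : #𝒜 = k := le_antisymm hsmall (not_lt.1 fun h => hhit ⟨T, by omega, hTmeet⟩)
  have hdisj : (𝒜 : Set {s : Finset α // #s = k}).PairwiseDisjoint Subtype.val := by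
    intro A hA B hB hAB
    by_contra hmeet
    obtain ⟨T, hT, hTmeet⟩ := exists_hittingSet_card_lt_of_not_disjoint hne hA hB hAB hmeet
    exact hhit ⟨T, hcard ▸ hT, hTmeet⟩
  have := two_le_card_transversals_sdiff hk hcard hdisj
  omega

theorem exists_pairwiseDisjoint_card_eq {m : ℕ} (hk : 0 < k) (h : m * k ≤ Fintype.card α) :
    ∃ 𝒜 : Finset {s : Finset α // #s = k},
      #𝒜 = m ∧ (𝒜 : Set {s : Finset α // #s = k}).PairwiseDisjoint Subtype.val := by
  obtain ⟨e⟩ := Function.Embedding.nonempty_of_card_le (α := Fin m × Fin k) (β := α)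
    (by simpa using h)
  let block : Fin m → {s : Finset α // #s = k} := fun i =>
    ⟨univ.map ((Function.Embedding.sectR i (Fin k)).trans e), by simp⟩
  have hblock : ∀ i x, x ∈ (block i).1 ↔ ∃ j, e (i, j) = x := by simp [block]
  have hdisj : ∀ i i', i ≠ i' → Disjoint (block i).1 (block i').1 := by
    intro i i' hii'
    refine disjoint_left.2 fun x hx hx' => ?_
    obtain ⟨j, rfl⟩ := (hblock i x).1 hx
    obtain ⟨j', hj'⟩ := (hblock i' _).1 hx'
    exact hii' (congrArg Prod.fst (e.injective hj')).symm
  have hinj : Function.Injective block := fun i i' h => by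
    by_contra hii'
    obtain ⟨x, hx⟩ := card_pos.1 (show 0 < #(block i).1 by rw [(block i).2]; exact hk)
    exact disjoint_left.1 (hdisj i i' hii') hx (congrArg Subtype.val h ▸ hx)
  refine ⟨univ.image block, by rw [card_image_of_injective _ hinj, card_univ, Fintype.card_fin], ?_⟩
  simp only [coe_image, coe_univ, Set.image_univ]
  rintro _ ⟨i, rfl⟩ _ ⟨i', rfl⟩ hne
  exact hdisj i i' fun h => hne (h ▸ rfl)

end KSets

section Kneser

variable {n k : ℕ}

theorem kneserGraph_isDominatingSet_of_pairwiseDisjoint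
    {S : Finset {s : Finset (Fin n) // #s = k}}
    (hS : (S : Set {s : Finset (Fin n) // #s = k}).PairwiseDisjoint Subtype.val)
    (hcard : k < #S) : IsDominatingSet (kneserGraph n k) S := by
  intro v hv
  obtain ⟨A, hA, hdisj⟩ :=
    exists_disjoint_of_card_lt_of_pairwiseDisjoint v.1 hS (by rw [v.2]; exact hcard)
  exact ⟨A, hA, fun h => hv (h ▸ hA), hdisj⟩

theorem kneserGraph_le_sum_of_isRDF (hk : 1 < k) (hn : 3 * k ≤ n)
    {f : {s : Finset (Fin n) // #s = k} → ℕ} (hf : IsRDF (kneserGraph n k) f) :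
    2 * (k + 1) ≤ ∑ v, f v := by
  refine (two_mul_succ_le_two_mul_card_add_card_transversals_sdiff hk
    (by simpa using hn) {v | f v = 2}).trans ?_
  exact hf.two_mul_card_add_card_sdiff_le_sum fun v hv u hu hadj =>
    mem_transversals.1 hv u (mem_filter.2 ⟨mem_univ u, hu⟩) hadj.2

end Kneser

theorem kneser_romanDomNum (n k : ℕ) (hk : 1 < k) (hn : k * (k + 1) ≤ n) :
    romanDomNum (kneserGraph n k) = 2 * (k + 1) := by
  refine romanDomNum_eq_of_forall_le
    (fun f hf => kneserGraph_le_sum_of_isRDF hk (by nlinarith) hf) ?_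
  obtain ⟨S, hcard, hdisj⟩ := exists_pairwiseDisjoint_card_eq (α := Fin n) (k := k) (m := k + 1)
    (by omega) (by simpa [mul_comm] using hn)
  exact hcard ▸
    (kneserGraph_isDominatingSet_of_pairwiseDisjoint hdisj (by omega)).exists_isRDF_sum_eq
end

section
/- For every odd integer n with n ≥ 12 (equivalently, every odd n ≥ 13), the signed Roman domination number of the Kneser graph K_{n,2} satisfies γ_sR(K_{n,2}) ≤ 3. -/
/-!
Write `n = 2m + 3` and let `σ` be a cyclic permutation of a set `Q` of `m ≥ 5` points. With
`ε = -1` on `Q` and `ε = 1` off `Q`, give the pair `{a, b}` the weight `ε a * ε b`, plus `1` when it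
is an edge `{x, σ x}` of the cycle. Since `ε² = 1`, twice the total weight of the pairs inside a set
`R` is `(∑_R ε)² - |R|` plus twice the number of cycle edges inside `R`. As `∑ ε = n - 2m = 3`,
all pairs together weigh `3`, and the pairs disjoint from `{a, b}` weigh enough to make the closed
neighbourhood sum at least `1`, because a point `x` lies on at most `1 - ε x` cycle edges. The same
count leaves at least `m - 4 ≥ 1` cycle edges (pairs of weight `2`) disjoint from any `{a, b}`.
-/

open Finset

namespace Finset

variable {α β : Type*} [DecidableEq α] [CommRing β]

theorem sum_powersetCard_two_insert_prod (f : α → β) {a : α} {s : Finset α} (ha : a ∉ s) :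
    ∑ t ∈ (insert a s).powersetCard 2, ∏ i ∈ t, f i
      = ∑ t ∈ s.powersetCard 2, ∏ i ∈ t, f i + f a * ∑ i ∈ s, f i := by
  have hpairs : (s.powersetCard 1).image (insert a) = s.image fun i => {a, i} := by
    rw [powersetCard_one, map_eq_image, image_image]; rfl
  have hdisj : Disjoint (s.powersetCard 2) (s.image fun i => {a, i}) := by
    refine disjoint_left.2 fun t ht ht' => ?_
    obtain ⟨i, -, rfl⟩ := mem_image.1 ht'
    exact ha ((mem_powersetCard.1 ht).1 (mem_insert_self a _))
  have hinj : Set.InjOn (fun i => ({a, i} : Finset α)) s := fun i hi j _ hij =>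
    (insert_inj (mem_singleton.not.2 (ne_of_mem_of_not_mem hi ha))).1 (by
      simpa only [pair_comm a] using hij)
  rw [powersetCard_succ_insert ha, hpairs, sum_union hdisj, sum_image hinj, mul_sum]
  congr 1
  refine sum_congr rfl fun i hi => ?_
  exact prod_pair (ne_of_mem_of_not_mem hi ha).symm

theorem two_mul_sum_powersetCard_two_prod (f : α → β) (s : Finset α) :
    2 * ∑ t ∈ s.powersetCard 2, ∏ i ∈ t, f i = (∑ i ∈ s, f i) ^ 2 - ∑ i ∈ s, f i ^ 2 := by
  induction s using Finset.induction_on with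
  | empty => rw [powersetCard_eq_empty.2 (by simp)]; simp
  | insert a s ha ih =>
    rw [sum_powersetCard_two_insert_prod f ha, sum_insert ha, sum_insert ha]
    linear_combination ih

end Finset

namespace Equiv.Perm

variable {α : Type*} [Fintype α] [DecidableEq α] {σ : Perm α}

theorem IsCycle.apply_apply_ne (hσ : σ.IsCycle) (h3 : 3 ≤ #σ.support) {x : α}
    (hx : x ∈ σ.support) : σ (σ x) ≠ x := by
  intro hxx
  have hsq : σ ^ 2 = 1 := (hσ.pow_eq_one_iff' (mem_support.1 hx)).2 (by simpa [sq] using hxx)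
  have := Nat.le_of_dvd two_pos (hσ.orderOf ▸ orderOf_dvd_of_pow_eq_one hsq)
  omega

variable (σ) in
def cycleEdges : Finset (Finset α) := σ.support.image fun x => {x, σ x}

theorem card_of_mem_cycleEdges {c : Finset α} (hc : c ∈ σ.cycleEdges) : #c = 2 := by
  obtain ⟨x, hx, rfl⟩ := mem_image.1 hc
  exact card_pair (mem_support.1 hx).symm

theorem subset_support_of_mem_cycleEdges {c : Finset α} (hc : c ∈ σ.cycleEdges) :
    c ⊆ σ.support := by
  obtain ⟨x, hx, rfl⟩ := mem_image.1 hc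
  exact insert_subset hx (singleton_subset_iff.2 (apply_mem_support.2 hx))

theorem card_cycleEdges (hσ : σ.IsCycle) (h3 : 3 ≤ #σ.support) :
    #σ.cycleEdges = #σ.support := by
  refine card_image_of_injOn fun x hx y hy hxy => ?_
  have hx' : x ∈ ({y, σ y} : Finset α) := hxy ▸ mem_insert_self x _
  rcases mem_insert.1 hx' with h | h
  · exact h
  · have hy' : y ∈ ({x, σ x} : Finset α) := hxy ▸ mem_insert_self y _
    rcases mem_insert.1 hy' with h' | h'
    · exact h'.symm
    · rw [mem_singleton] at h h'
      exact absurd (by rw [← h, ← h']) (hσ.apply_apply_ne h3 hy)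

theorem card_filter_mem_cycleEdges_le (b : α) : #{c ∈ σ.cycleEdges | b ∈ c} ≤ 2 := by
  rw [cycleEdges, filter_image]
  refine card_image_le.trans (le_trans (card_le_card (t := {b, σ.symm b}) fun x hx => ?_)
    card_le_two)
  obtain ⟨-, hbx⟩ := mem_filter.1 hx
  rcases mem_insert.1 hbx with rfl | h
  · exact mem_insert_self _ _
  · rw [mem_singleton] at h
    simp [h]

theorem filter_mem_cycleEdges_eq_empty {b : α} (hb : b ∉ σ.support) :
    {c ∈ σ.cycleEdges | b ∈ c} = ∅ :=
  filter_eq_empty_iff.2 fun _ hc hbc => hb (subset_support_of_mem_cycleEdges hc hbc)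

end Equiv.Perm

open Equiv Perm

section KneserWeight

variable {α : Type*} [Fintype α] [DecidableEq α]

def supportSign (σ : Perm α) (x : α) : ℤ := if x ∈ σ.support then -1 else 1

def kneserWeight (σ : Perm α) (s : Finset α) : ℤ :=
  ∏ x ∈ s, supportSign σ x + if s ∈ σ.cycleEdges then 1 else 0

variable {σ : Perm α}

theorem supportSign_eq_one_or_neg_one (x : α) : supportSign σ x = 1 ∨ supportSign σ x = -1 := by
  unfold supportSign; split_ifs <;> simp

theorem sum_supportSign : ∑ x, supportSign σ x = Fintype.card α - 2 * #σ.support := by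
  simp only [supportSign]
  rw [sum_ite, filter_univ_mem, filter_not, filter_univ_mem, sum_const, sum_const,
    ← compl_eq_univ_sdiff]
  have := card_add_card_compl σ.support
  simp only [smul_neg, nsmul_eq_mul, mul_one]
  omega

theorem card_filter_mem_cycleEdges_le_one_sub_supportSign (b : α) :
    (#{c ∈ σ.cycleEdges | b ∈ c} : ℤ) ≤ 1 - supportSign σ b := by
  unfold supportSign
  split_ifs with hb
  · have := card_filter_mem_cycleEdges_le (σ := σ) b
    omega
  · simp [filter_mem_cycleEdges_eq_empty hb]

theorem card_support_sub_le_card_filter_cycleEdges_subset (hσ : σ.IsCycle)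
    (h3 : 3 ≤ #σ.support) (a b : α) :
    (#σ.support : ℤ) - (1 - supportSign σ a) - (1 - supportSign σ b)
      ≤ #{c ∈ σ.cycleEdges | c ⊆ univ \ {a, b}} := by
  have hsplit := card_filter_add_card_filter_not (s := σ.cycleEdges) fun c => a ∈ c ∨ b ∈ c
  rw [filter_or, card_cycleEdges hσ h3] at hsplit
  have hunion := card_union_le {c ∈ σ.cycleEdges | a ∈ c} {c ∈ σ.cycleEdges | b ∈ c}
  have havoid :
      {c ∈ σ.cycleEdges | c ⊆ univ \ {a, b}} = {c ∈ σ.cycleEdges | ¬(a ∈ c ∨ b ∈ c)} :=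
    filter_congr fun c _ => by simp [subset_sdiff, disjoint_insert_right]
  rw [havoid]
  have := card_filter_mem_cycleEdges_le_one_sub_supportSign (σ := σ) a
  have := card_filter_mem_cycleEdges_le_one_sub_supportSign (σ := σ) b
  omega

theorem kneserWeight_of_mem_cycleEdges {c : Finset α} (hc : c ∈ σ.cycleEdges) :
    kneserWeight σ c = 2 := by
  have hsign : ∀ x ∈ c, supportSign σ x = -1 := fun x hx =>
    if_pos (subset_support_of_mem_cycleEdges hc hx)
  rw [kneserWeight, prod_congr rfl hsign, prod_const, card_of_mem_cycleEdges hc, if_pos hc]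
  norm_num

theorem kneserWeight_pair {a b : α} (hab : a ≠ b) :
    kneserWeight σ {a, b} = supportSign σ a * supportSign σ b
      + if {a, b} ∈ σ.cycleEdges then 1 else 0 := by
  rw [kneserWeight, prod_pair hab]

theorem kneserWeight_mem {s : Finset α} (hs : #s = 2) :
    kneserWeight σ s = -1 ∨ kneserWeight σ s = 1 ∨ kneserWeight σ s = 2 := by
  by_cases hc : s ∈ σ.cycleEdges
  · simp [kneserWeight_of_mem_cycleEdges hc]
  obtain ⟨a, b, hab, rfl⟩ := card_eq_two.1 hs
  rw [kneserWeight_pair hab, if_neg hc]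
  rcases supportSign_eq_one_or_neg_one (σ := σ) a with ha | ha <;>
    rcases supportSign_eq_one_or_neg_one (σ := σ) b with hb | hb <;> simp [ha, hb]

theorem two_mul_sum_kneserWeight (R : Finset α) :
    2 * ∑ s ∈ R.powersetCard 2, kneserWeight σ s
      = (∑ x ∈ R, supportSign σ x) ^ 2 - #R + 2 * #{c ∈ σ.cycleEdges | c ⊆ R} := by
  have hedges : ∑ s ∈ R.powersetCard 2, (if s ∈ σ.cycleEdges then 1 else 0 : ℤ)
      = #{c ∈ σ.cycleEdges | c ⊆ R} := by
    rw [sum_boole, Nat.cast_inj]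
    refine congrArg card (ext fun c => ?_)
    simp only [mem_filter, mem_powersetCard]
    exact ⟨fun ⟨⟨hR, _⟩, hc⟩ => ⟨hc, hR⟩, fun ⟨hc, hR⟩ => ⟨⟨hR, card_of_mem_cycleEdges hc⟩, hc⟩⟩
  have hsq : ∑ x ∈ R, supportSign σ x ^ 2 = #R := by
    simp [sq, supportSign]
  simp only [kneserWeight, sum_add_distrib, mul_add, two_mul_sum_powersetCard_two_prod, hsq,
    hedges]

theorem sum_kneserWeight (hσ : σ.IsCycle) (h3 : 3 ≤ #σ.support)
    (hcard : Fintype.card α = 2 * #σ.support + 3) :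
    ∑ s ∈ univ.powersetCard 2, kneserWeight σ s = 3 := by
  have h := two_mul_sum_kneserWeight (σ := σ) univ
  rw [sum_supportSign, card_univ, filter_true_of_mem fun c _ => subset_univ c,
    card_cycleEdges hσ h3, hcard] at h
  push_cast at h
  linarith

theorem one_le_kneserWeight_add_sum_disjoint (hσ : σ.IsCycle) (h3 : 3 ≤ #σ.support)
    (hcard : Fintype.card α = 2 * #σ.support + 3) {s : Finset α} (hs : #s = 2) :
    1 ≤ kneserWeight σ s + ∑ t ∈ (univ \ s).powersetCard 2, kneserWeight σ t := by
  obtain ⟨a, b, hab, rfl⟩ := card_eq_two.1 hs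
  have h := two_mul_sum_kneserWeight (σ := σ) (univ \ {a, b})
  rw [sum_sdiff_eq_sub (subset_univ _), sum_supportSign, sum_pair hab,
    card_sdiff_of_subset (subset_univ _), card_univ, hs, hcard] at h
  have havoid := card_support_sub_le_card_filter_cycleEdges_subset hσ h3 a b
  have hw : supportSign σ a * supportSign σ b ≤ kneserWeight σ {a, b} := by
    rw [kneserWeight_pair hab]
    split_ifs <;> simp
  push_cast at h
  rcases supportSign_eq_one_or_neg_one (σ := σ) a with ha | ha <;>
    rcases supportSign_eq_one_or_neg_one (σ := σ) b with hb | hb <;>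
    · rw [ha, hb] at h havoid hw
      nlinarith

theorem exists_mem_cycleEdges_disjoint (hσ : σ.IsCycle) (h5 : 5 ≤ #σ.support) (a b : α) :
    ∃ c ∈ σ.cycleEdges, Disjoint {a, b} c := by
  have havoid := card_support_sub_le_card_filter_cycleEdges_subset hσ (by omega) a b
  have ha := supportSign_eq_one_or_neg_one (σ := σ) a
  have hb := supportSign_eq_one_or_neg_one (σ := σ) b
  obtain ⟨c, hc⟩ : ({c ∈ σ.cycleEdges | c ⊆ univ \ {a, b}}).Nonempty := by
    rw [← card_pos]
    omega
  rw [mem_filter, subset_sdiff] at hc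
  exact ⟨c, hc.1, hc.2.2.symm⟩

end KneserWeight

theorem signedRomanDomNum_le {V : Type*} [Fintype V] {G : SimpleGraph V} {f : V → ℤ}
    (hf : IsSRDF G f) : signedRomanDomNum G ≤ ∑ v, f v := by
  refine csInf_le ⟨-Fintype.card V, ?_⟩ ⟨f, hf, rfl⟩
  rintro _ ⟨g, hg, rfl⟩
  have hge : ∀ v, -1 ≤ g v := fun v => by rcases hg.1 v with h | h | h <;> rw [h] <;> norm_num
  simpa using sum_le_sum fun v (_ : v ∈ univ) => hge v

section Kneser

variable {n k : ℕ}

theorem kneserGraph_adj_iff (hk : 0 < k) {u v : {s : Finset (Fin n) // #s = k}} :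
    (kneserGraph n k).Adj u v ↔ Disjoint u.1 v.1 := by
  refine ⟨And.right, fun h => ⟨fun huv => ?_, h⟩⟩
  obtain ⟨x, hx⟩ := card_pos.1 (u.2 ▸ hk)
  exact disjoint_left.1 h hx (huv ▸ hx)

theorem sum_kneserGraph {M : Type*} [AddCommMonoid M] (w : Finset (Fin n) → M) :
    ∑ v : {s : Finset (Fin n) // #s = k}, w v.1 = ∑ s ∈ univ.powersetCard k, w s :=
  (sum_subtype _ (fun _ => mem_powersetCard_univ) w).symm

theorem sum_filter_adj_kneserGraph [DecidableRel (kneserGraph n k).Adj] {M : Type*}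
    [AddCommMonoid M] (hk : 0 < k) (w : Finset (Fin n) → M)
    (v : {s : Finset (Fin n) // #s = k}) :
    ∑ u ∈ univ.filter ((kneserGraph n k).Adj v), w u.1
      = ∑ s ∈ (univ \ v.1).powersetCard k, w s := by
  have hnbrs : (univ.filter ((kneserGraph n k).Adj v)).map (Function.Embedding.subtype _)
      = (univ \ v.1).powersetCard k := by
    ext s
    simp only [mem_map, mem_filter, mem_univ, true_and, Function.Embedding.subtype_apply,
      kneserGraph_adj_iff hk, mem_powersetCard, subset_sdiff, subset_univ]
    constructor
    · rintro ⟨u, hvu, rfl⟩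
      exact ⟨hvu.symm, u.2⟩
    · rintro ⟨hvs, hs⟩
      exact ⟨⟨s, hs⟩, hvs.symm, rfl⟩
  rw [← hnbrs, sum_map]
  rfl

theorem isSRDF_kneserWeight {σ : Perm (Fin n)} (hσ : σ.IsCycle) (h5 : 5 ≤ #σ.support)
    (hn : n = 2 * #σ.support + 3) :
    IsSRDF (kneserGraph n 2) fun v => kneserWeight σ v.1 := by
  have hcard : Fintype.card (Fin n) = 2 * #σ.support + 3 := (Fintype.card_fin n).trans hn
  refine ⟨fun v => kneserWeight_mem v.2, fun v _ => ?_, fun v => ?_⟩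
  · obtain ⟨a, b, -, hv⟩ := card_eq_two.1 v.2
    obtain ⟨c, hc, hvc⟩ := exists_mem_cycleEdges_disjoint hσ h5 a b
    exact ⟨⟨c, card_of_mem_cycleEdges hc⟩, (kneserGraph_adj_iff two_pos).2 (hv ▸ hvc),
      kneserWeight_of_mem_cycleEdges hc⟩
  · classical
    rw [sum_filter_adj_kneserGraph two_pos]
    exact one_le_kneserWeight_add_sum_disjoint hσ (by omega) hcard v.2

end Kneser

theorem kneser2_signedRomanDomNum_upper_odd (n : ℕ) (hn : 12 ≤ n) (hodd : Odd n) :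
    signedRomanDomNum (kneserGraph n 2) ≤ 3 := by
  obtain ⟨k, rfl⟩ := hodd
  have : NeZero (2 * k + 1) := ⟨by omega⟩
  set σ := Fin.cycleRange (⟨k - 2, by omega⟩ : Fin (2 * k + 1))
  have hi : (⟨k - 2, by omega⟩ : Fin (2 * k + 1)) ≠ 0 := by
    rw [ne_eq, Fin.ext_iff, Fin.val_zero, Fin.val_mk]
    omega
  have hσ : σ.IsCycle := Fin.isCycle_cycleRange hi
  have hsupp : #σ.support = k - 1 := by
    rw [← sum_cycleType, Fin.cycleType_cycleRange hi, Multiset.sum_singleton, Fin.val_mk]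
    omega
  calc signedRomanDomNum (kneserGraph (2 * k + 1) 2)
      ≤ ∑ v, kneserWeight σ v.1 :=
        signedRomanDomNum_le (isSRDF_kneserWeight hσ (by omega) (by omega))
    _ = 3 := by
        rw [sum_kneserGraph, sum_kneserWeight hσ (by omega) (by rw [Fintype.card_fin]; omega)]
end

section
/- The Roman domination number of the Kneser graph K_{5,2} equals 6, i.e. γ_R(K_{5,2}) = 6. -/
/-!
`K_{5,2}` is the Petersen graph: 10 vertices, 3-regular. Under a Roman dominating function each
vertex of weight 2 dominates at most 3 vertices of weight 0, so `10 ≤ 4·#V₂ + #V₁`, and over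
the integers this forces the weight `#V₁ + 2·#V₂` to be at least 6. Weight 2 on the three pairs
inside `{2, 3, 4}` attains it.
-/
open Finset

instance (n k : ℕ) : DecidableRel (kneserGraph n k).Adj :=
  fun a b => inferInstanceAs (Decidable (a ≠ b ∧ Disjoint a.1 b.1))

namespace IsRDF

variable {V : Type*} [Fintype V] {G : SimpleGraph V} {f : V → ℕ}

theorem sum_eq (hf : IsRDF G f) :
    ∑ v, f v = #{v | f v = 1} + 2 * #{v | f v = 2} := by
  rw [card_filter, card_filter, mul_sum, ← sum_add_distrib]
  refine sum_congr rfl fun v _ => ?_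
  have := hf.1 v
  split_ifs <;> omega

theorem card_zero_le_of_degree_le [DecidableRel G.Adj] {d : ℕ} (hd : ∀ v, G.degree v ≤ d)
    (hf : IsRDF G f) :
    #{v | f v = 0} ≤ d * #{v | f v = 2} := by
  classical
  calc #{v | f v = 0}
      ≤ (({v | f v = 2} : Finset V).biUnion fun u => G.neighborFinset u).card := by
        refine card_le_card fun v hv => ?_
        obtain ⟨u, hvu, hu⟩ := hf.2 v (mem_filter.1 hv).2
        exact mem_biUnion.2
          ⟨u, mem_filter.2 ⟨mem_univ u, hu⟩, (G.mem_neighborFinset u v).2 hvu.symm⟩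
    _ ≤ ∑ u ∈ {v | f v = 2}, (G.neighborFinset u).card := card_biUnion_le
    _ ≤ ∑ _u ∈ ({v | f v = 2} : Finset V), d :=
        sum_le_sum fun u _ => (G.card_neighborFinset_eq_degree u).trans_le (hd u)
    _ = d * #{v | f v = 2} := by rw [sum_const, smul_eq_mul, mul_comm]

theorem card_eq (hf : IsRDF G f) :
    Fintype.card V = #{v | f v = 0} + #{v | f v = 1} + #{v | f v = 2} := by
  rw [card_filter, card_filter, card_filter, ← sum_add_distrib, ← sum_add_distrib,
    Fintype.card_eq_sum_ones]
  refine sum_congr rfl fun v _ => ?_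
  have := hf.1 v
  split_ifs <;> omega

/-- Integral form of `γ_R(G) ≥ 2n / (Δ + 1)`. -/
theorem card_le_of_degree_le [DecidableRel G.Adj] {d : ℕ} (hd : ∀ v, G.degree v ≤ d)
    (hf : IsRDF G f) :
    Fintype.card V ≤ (d + 1) * #{v | f v = 2} + #{v | f v = 1} := by
  have := hf.card_eq
  have := hf.card_zero_le_of_degree_le hd
  rw [add_mul, one_mul]
  omega

end IsRDF

theorem isRDF_const_one {V : Type*} (G : SimpleGraph V) : IsRDF G 1 :=
  ⟨fun _ => by simp, fun _ h => absurd h one_ne_zero⟩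

theorem romanDomNum_le {V : Type*} [Fintype V] {G : SimpleGraph V} {f : V → ℕ}
    (hf : IsRDF G f) : romanDomNum G ≤ ∑ v, f v :=
  Nat.sInf_le ⟨f, hf, rfl⟩

theorem le_romanDomNum {V : Type*} [Fintype V] {G : SimpleGraph V} {w : ℕ}
    (h : ∀ f, IsRDF G f → w ≤ ∑ v, f v) : w ≤ romanDomNum G :=
  le_csInf ⟨_, 1, isRDF_const_one G, rfl⟩ fun _ ⟨f, hf, hw⟩ => hw ▸ h f hf

theorem kneserGraph_five_two_degree (v : {s : Finset (Fin 5) // s.card = 2}) :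
    (kneserGraph 5 2).degree v = 3 := by
  revert v; decide

theorem card_kneserGraph_five_two_vertices :
    Fintype.card {s : Finset (Fin 5) // s.card = 2} = 10 := by
  decide

/-- Every pair other than the three inside `{2, 3, 4}` is disjoint from one of them. -/
theorem isRDF_kneserGraph_five_two :
    IsRDF (kneserGraph 5 2) fun v => if v.1 ⊆ {2, 3, 4} then 2 else 0 := by
  refine ⟨fun v => by dsimp only; split <;> omega, ?_⟩
  decide

theorem kneser52_romanDomNum : romanDomNum (kneserGraph 5 2) = 6 := by
  refine le_antisymm ((romanDomNum_le isRDF_kneserGraph_five_two).trans_eq (by decide)) ?_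
  refine le_romanDomNum fun f hf => ?_
  have hcard := hf.card_le_of_degree_le (fun v => (kneserGraph_five_two_degree v).le)
  rw [card_kneserGraph_five_two_vertices] at hcard
  rw [hf.sum_eq]
  omega
end

section
/- Let k > 1 and n ≥ k(k+1). Define f on the vertices of the Kneser graph K_{n,k} by f(v) = 2 if v is one of the k+1 pairwise disjoint k-element sets {ik+1, ik+2, …, (i+1)k} for i = 0, 1, …, k, and f(v) = 0 otherwise. Then f is a total Roman dominating function on K_{n,k} of weight 2(k+1). -/
/-!
Every vertex of `K(n,k)` is disjoint from one of the `k + 1` pairwise disjoint blocks, since a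
`k`-set can meet at most `k` of them (pigeonhole); as `k > 0`, it is then adjacent to that block.
So the blocks form a total dominating set, and
labelling a total dominating set `S` by `2` (everything else by `0`) is a total Roman dominating
function of weight `2 |S|`.
-/

open Finset Function

theorem isTRDF_ite_mem_of_forall_exists_adj {V : Type*} [Fintype V] [DecidableEq V]
    (G : SimpleGraph V) (S : Finset V) (hS : ∀ v, ∃ u ∈ S, G.Adj v u) :
    IsTRDF G fun v => if v ∈ S then 2 else 0 := by
  classical
  refine ⟨⟨fun v => by by_cases v ∈ S <;> simp [*], fun v _ => ?_⟩, fun v => ?_⟩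
  · obtain ⟨u, hu, hvu⟩ := hS v
    exact ⟨u, hvu, if_pos hu⟩
  · obtain ⟨u, hu, hvu⟩ := hS v
    refine le_trans ?_
      (single_le_sum (fun _ _ => Nat.zero_le _) (mem_filter.mpr ⟨mem_univ u, hvu⟩))
    simp [hu]

theorem exists_disjoint_of_card_lt {ι α : Type*} [Fintype ι] {B : ι → Finset α}
    (hB : Pairwise (Disjoint on B)) {s : Finset α} (hs : #s < Fintype.card ι) :
    ∃ i, Disjoint s (B i) := by
  by_contra! hmeet
  choose x hxs hxB using fun i => not_disjoint_iff.mp (hmeet i)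
  obtain ⟨i, j, hij, hx⟩ :=
    Fintype.exists_ne_map_eq_of_card_lt (fun i => (⟨x i, hxs i⟩ : s)) (by simpa using hs)
  have hxij : x i = x j := congrArg Subtype.val hx
  have hxj : x i ∈ B j := hxij ▸ hxB j
  exact disjoint_left.mp (hB hij) (hxB i) hxj

theorem injective_of_pairwise_disjoint_of_nonempty {ι α : Type*} {B : ι → Finset α}
    (hB : Pairwise (Disjoint on B)) (hne : ∀ i, (B i).Nonempty) : Injective B := by
  intro i j hij
  by_contra hne_ij
  have hBij : Disjoint (B i) (B j) := hB hne_ij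
  rw [hij, disjoint_self_iff_empty] at hBij
  exact (hne j).ne_empty hBij

theorem kneserGraph_adj_of_disjoint {n k : ℕ} (hk : 0 < k) {u v : {s : Finset (Fin n) // #s = k}}
    (huv : Disjoint u.1 v.1) : (kneserGraph n k).Adj u v := by
  refine ⟨fun h => ?_, huv⟩
  rw [h, disjoint_self_iff_empty] at huv
  have := v.2
  simp [huv] at this
  omega

def kblock (n k i : ℕ) : Finset (Fin n) :=
  univ.filter fun x : Fin n => i * k ≤ x.1 ∧ x.1 < (i + 1) * k

theorem card_kblock {n k i : ℕ} (h : (i + 1) * k ≤ n) : #(kblock n k i) = k := by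
  have hlt : ∀ m ∈ Ico (i * k) ((i + 1) * k), m < n := fun m hm => (mem_Ico.mp hm).2.trans_le h
  have : kblock n k i = (Ico (i * k) ((i + 1) * k)).attachFin hlt := by
    ext x
    simp [kblock]
  rw [this, card_attachFin, Nat.card_Ico, add_mul, one_mul, Nat.add_sub_cancel_left]

theorem pairwise_disjoint_kblock (n k : ℕ) : Pairwise (Disjoint on kblock n k) := by
  intro i j hij
  refine disjoint_left.mpr fun x hi hj => hij ?_
  simp only [kblock, mem_filter, mem_univ, true_and] at hi hj
  have := Nat.lt_of_mul_lt_mul_right (hi.1.trans_lt hj.2)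
  have := Nat.lt_of_mul_lt_mul_right (hj.1.trans_lt hi.2)
  omega

theorem kneser_explicit_TRDF (n k : ℕ) (hk : 1 < k) (hn : k * (k + 1) ≤ n)
    (f : {s : Finset (Fin n) // s.card = k} → ℕ)
    (hf : ∀ v, f v = if ∃ i : Fin (k + 1),
        (v : Finset (Fin n)) =
          Finset.univ.filter (fun x : Fin n => i.1 * k ≤ x.1 ∧ x.1 < (i.1 + 1) * k)
      then 2 else 0) :
    IsTRDF (kneserGraph n k) f ∧ ∑ v, f v = 2 * (k + 1) := by
  classical
  have hcard (i : Fin (k + 1)) : #(kblock n k i) = k :=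
    card_kblock (by nlinarith [i.2])
  have hdisj : Pairwise (Disjoint on fun i : Fin (k + 1) => kblock n k i) :=
    (pairwise_disjoint_kblock n k).comp_of_injective Fin.val_injective
  set B : Fin (k + 1) → {s : Finset (Fin n) // #s = k} := fun i => ⟨kblock n k i, hcard i⟩
  have hB : Injective B := fun i j hij =>
    injective_of_pairwise_disjoint_of_nonempty hdisj (fun i => card_pos.mp (by rw [hcard]; omega))
      (congrArg Subtype.val hij)
  have hf' : f = fun v => if v ∈ univ.image B then 2 else 0 := funext fun v => by
    simp [hf, B, kblock, Subtype.ext_iff, eq_comm]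
  have hdom (v) : ∃ u ∈ univ.image B, (kneserGraph n k).Adj v u := by
    obtain ⟨i, hi⟩ := exists_disjoint_of_card_lt hdisj (s := v.1) (by simp [v.2])
    exact ⟨B i, mem_image_of_mem _ (mem_univ _), kneserGraph_adj_of_disjoint (by omega) hi⟩
  subst hf'
  exact ⟨isTRDF_ite_mem_of_forall_exists_adj _ _ hdom,
    by rw [Fintype.sum_ite_mem, sum_const, card_image_of_injective _ hB, card_univ,
      Fintype.card_fin, smul_eq_mul, mul_comm]⟩
end
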